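/- Let u : ℝ → ℝ be four times continuously differentiable (ContDiff ℝ 4) and b ∈ ℝ. Then there exist constants C ≥ 0 and h₀ > 0 such that for all 0 < h ≤ h₀, | (3u(b+h) − 3u(b+2h) + u(b+3h) − u(b))/(4h²) − (h/4)·u'''(b+h) | ≤ C h². In particular this boundary-modified numerical moment is O(h) as h → 0⁺, so the auxiliary boundary condition equating second differences at adjacent nodes yields a local truncation error of order h^{1+p} at grid nodes adjacent to the boundary when the moment is scaled by γ h^p. -/
import Mathlib

open Set

private lemma idw_eq_id {u : ℝ → ℝ} (hu : ContDiff ℝ 4 u) {s : Set ℝ}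
    (hs : UniqueDiffOn ℝ s) {x : ℝ} (hx : x ∈ s) {m : ℕ} (hm : (m : WithTop ℕ∞) ≤ 4) :
    iteratedDerivWithin m u s x = iteratedDeriv m u x := by
  rw [iteratedDerivWithin_eq_iteratedFDerivWithin, iteratedDeriv_eq_iteratedFDeriv]
  congr 1
  exact (((contDiff_iff_ftaylorSeries (n := 4)).mp hu).hasFTaylorSeriesUpToOn
    s).eq_iteratedFDerivWithin_of_uniqueDiffOn hm hs hx |>.symm

/-- Boundary-modified numerical moment with auxiliary condition (3.4b):
after eliminating the ghost value via `−δ²_h u (b) + δ²_h u (b+h) = 0`, the moment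
at the first interior node `b + h` equals
`(3u(b+h) − 3u(b+2h) + u(b+3h) − u(b))/(4h²)`, which is `(h/4)u'''(b+h) + O(h²)`;
i.e. the moment itself is `O(h)` as `h → 0⁺`. -/
theorem boundary_moment_bc2b_truncation
    (u : ℝ → ℝ) (hu : ContDiff ℝ 4 u) (b : ℝ) :
    ∃ C : ℝ, 0 ≤ C ∧ ∃ h₀ : ℝ, 0 < h₀ ∧ ∀ h : ℝ, 0 < h → h ≤ h₀ →
      |(3 * u (b + h) - 3 * u (b + 2 * h) + u (b + 3 * h) - u b) / (4 * h ^ 2)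
        - (h / 4) * iteratedDeriv 3 u (b + h)| ≤ C * h ^ 2 := by
  have hb3 : b < b + 3 := by linarith
  set I := Set.Icc b (b + 3) with hI
  have hUD : UniqueDiffOn ℝ I := uniqueDiffOn_Icc hb3
  have hc4 : Continuous (iteratedDeriv 4 u) :=
    hu.continuous_iteratedDeriv 4 (by exact_mod_cast le_rfl)
  obtain ⟨M0, hM0⟩ := isCompact_Icc.exists_bound_of_continuousOn
    (hc4.continuousOn (s := I))
  set M := max M0 0 with hMdef
  have hM : ∀ y ∈ I, |iteratedDeriv 4 u y| ≤ M := fun y hy =>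
    le_trans (hM0 y hy) (le_max_left _ _)
  have hMnn : 0 ≤ M := le_max_right _ _
  refine ⟨6 * M, by positivity, 1, one_pos, fun h hp hle => ?_⟩
  have hmem : ∀ t : ℝ, 0 ≤ t → t ≤ 3 → b + t ∈ I := fun t h1 h2 =>
    ⟨by linarith, by linarith⟩
  have hx1 : b + h ∈ I := hmem h hp.le (by linarith)
  have hx2 : b + 2 * h ∈ I := hmem _ (by linarith) (by linarith)
  have hx3 : b + 3 * h ∈ I := hmem _ (by linarith) (by linarith)
  have hxb : b ∈ I := by constructor <;> linarith
  have hC : ∀ y ∈ I, ‖iteratedDerivWithin 4 u I y‖ ≤ M := by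
    intro y hy
    rw [idw_eq_id hu hUD hy (by norm_num), Real.norm_eq_abs]
    exact hM y hy
  have hTb : ∀ x ∈ I, |u x - taylorWithinEval u 3 I b x| ≤ M * (x - b) ^ 4 / 6 := by
    intro x hx
    have := taylor_mean_remainder_bound (n := 3) hb3.le
      (hu.contDiffOn (s := I)) hx hC
    simpa [Nat.factorial] using this
  set d3 := iteratedDerivWithin 3 u I b with hd3def
  have hT : ∀ x : ℝ, taylorWithinEval u 3 I b x =
      u b + (x - b) * iteratedDerivWithin 1 u I b
        + (x - b) ^ 2 / 2 * iteratedDerivWithin 2 u I b + (x - b) ^ 3 / 6 * d3 := by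
    intro x
    rw [taylor_within_apply]
    simp [Finset.sum_range_succ, Nat.factorial]
    ring
  have hd3 : d3 = iteratedDeriv 3 u b := idw_eq_id hu hUD hxb (by norm_num)
  set T := fun x : ℝ => taylorWithinEval u 3 I b x with hTdef
  set R1 := u (b + h) - T (b + h) with hR1
  set R2 := u (b + 2 * h) - T (b + 2 * h) with hR2
  set R3 := u (b + 3 * h) - T (b + 3 * h) with hR3
  have hub : u b = T b := (taylorWithinEval_self u 3 I b).symm
  have hid : 3 * u (b + h) - 3 * u (b + 2 * h) + u (b + 3 * h) - u b
      = 3 * R1 - 3 * R2 + R3 + h ^ 3 * d3 := by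
    rw [hR1, hR2, hR3, hub, hTdef]
    simp only [hT]
    ring
  have hR1b : |R1| ≤ M * h ^ 4 / 6 := by
    have := hTb _ hx1; rw [show b + h - b = h by ring] at this; exact this
  have hR2b : |R2| ≤ M * (2 * h) ^ 4 / 6 := by
    have := hTb _ hx2; rw [show b + 2 * h - b = 2 * h by ring] at this; exact this
  have hR3b : |R3| ≤ M * (3 * h) ^ 4 / 6 := by
    have := hTb _ hx3; rw [show b + 3 * h - b = 3 * h by ring] at this; exact this
  have hdiff3 : Differentiable ℝ (iteratedDeriv 3 u) :=
    hu.differentiable_iteratedDeriv 3 (by exact_mod_cast Nat.lt_succ_self 3)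
  have hLip : |iteratedDeriv 3 u b - iteratedDeriv 3 u (b + h)| ≤ M * h := by
    have key := Convex.norm_image_sub_le_of_norm_deriv_le (f := iteratedDeriv 3 u)
      (s := I) (C := M) (fun x _ => (hdiff3 x))
      (fun x hx => by
        rw [show deriv (iteratedDeriv 3 u) x = iteratedDeriv 4 u x from
          congrFun (iteratedDeriv_succ (n := 3)).symm x, Real.norm_eq_abs]
        exact hM x hx)
      (convex_Icc _ _) hx1 hxb
    rw [Real.norm_eq_abs, Real.norm_eq_abs] at key
    calc |iteratedDeriv 3 u b - iteratedDeriv 3 u (b + h)| ≤ M * |b - (b + h)| := key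
      _ = M * h := by rw [show b - (b + h) = -h by ring, abs_neg, abs_of_pos hp]
  have hne : h ≠ 0 := ne_of_gt hp
  have split : (3 * u (b + h) - 3 * u (b + 2 * h) + u (b + 3 * h) - u b) / (4 * h ^ 2)
      - (h / 4) * iteratedDeriv 3 u (b + h)
      = (3 * R1 - 3 * R2 + R3) / (4 * h ^ 2)
        + (h / 4) * (d3 - iteratedDeriv 3 u (b + h)) := by
    rw [hid]; field_simp; ring
  rw [split, hd3]
  have h4 : (0:ℝ) < 4 * h ^ 2 := by positivity
  have hA : |(3 * R1 - 3 * R2 + R3) / (4 * h ^ 2)| ≤ (22 * M * h ^ 4) / (4 * h ^ 2) := by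
    rw [abs_div, abs_of_pos h4]
    gcongr
    calc |3 * R1 - 3 * R2 + R3| ≤ |3 * R1 - 3 * R2| + |R3| := abs_add_le _ _
      _ ≤ |3 * R1| + |3 * R2| + |R3| := by
          have := abs_sub (3 * R1) (3 * R2)
          linarith
      _ = 3 * |R1| + 3 * |R2| + |R3| := by
          rw [abs_mul, abs_mul]; norm_num
      _ ≤ 3 * (M * h ^ 4 / 6) + 3 * (M * (2 * h) ^ 4 / 6) + M * (3 * h) ^ 4 / 6 := by
          gcongr
      _ = 22 * M * h ^ 4 := by ring
  have hA' : (22 * M * h ^ 4) / (4 * h ^ 2) = (22 / 4) * M * h ^ 2 := by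
    field_simp
  have hB : |(h / 4) * (iteratedDeriv 3 u b - iteratedDeriv 3 u (b + h))|
      ≤ (h / 4) * (M * h) := by
    rw [abs_mul, abs_of_pos (by linarith : (0:ℝ) < h / 4)]
    exact mul_le_mul_of_nonneg_left hLip (by linarith)
  calc |(3 * R1 - 3 * R2 + R3) / (4 * h ^ 2)
        + (h / 4) * (iteratedDeriv 3 u b - iteratedDeriv 3 u (b + h))|
      ≤ |(3 * R1 - 3 * R2 + R3) / (4 * h ^ 2)|
        + |(h / 4) * (iteratedDeriv 3 u b - iteratedDeriv 3 u (b + h))| := abs_add_le _ _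
    _ ≤ (22 / 4) * M * h ^ 2 + (h / 4) * (M * h) := by
        rw [← hA']; exact add_le_add hA hB
    _ = (22 / 4) * M * h ^ 2 + (1 / 4) * M * h ^ 2 := by ring
    _ ≤ 6 * M * h ^ 2 := by nlinarith [sq_nonneg h]
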